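/- Let I be an ideal and P an associated prime of I in a Noetherian ring. Then the double ideal quotient satisfies (I : (I : P)) = P. -/

import Mathlib

/-!
`J ↦ (I : J)` is an order-reversing Galois connection of the subsets of `R` with themselves
(`J ⊆ (I : K) ↔ K ⊆ (I : J)`, both saying `J K ⊆ I`), so `(I : (I : (I : S))) = (I : S)`.
In a Noetherian ring an associated prime of `R ⧸ I` is an annihilator `(I : x)` on the nose,
not only up to radical, hence a colon ideal itself.
-/

theorem Ideal.subset_colon_colon {R : Type*} [CommRing R] (I : Ideal R) (S : Set R) :
    S ⊆ I.colon (I.colon S) := fun s hs =>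
  Submodule.mem_colon.mpr fun r hr => by
    rw [smul_eq_mul, mul_comm]
    exact Submodule.mem_colon.mp hr s hs

theorem Ideal.colon_colon_colon {R : Type*} [CommRing R] (I : Ideal R) (S : Set R) :
    I.colon (I.colon (I.colon S)) = I.colon S :=
  le_antisymm (Submodule.colon_mono le_rfl (I.subset_colon_colon S)) (I.subset_colon_colon _)

theorem Ideal.bot_colon_singleton_mk {R : Type*} [CommRing R] (I : Ideal R) (x : R) :
    (⊥ : Submodule R (R ⧸ I)).colon {Ideal.Quotient.mk I x} = I.colon {x} := by
  ext r
  simp only [Submodule.mem_colon_singleton, Submodule.mem_bot, smul_eq_mul, Algebra.smul_def,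
    Ideal.Quotient.algebraMap_eq, ← map_mul, Ideal.Quotient.eq_zero_iff_mem]

/-- For an associated prime `P` of `I` in a Noetherian ring, the double ideal quotient
satisfies `(I : (I : P)) = P`. -/
theorem doubleIdealQuotient_eq_of_associated {R : Type*} [CommRing R] [IsNoetherianRing R]
    (I P : Ideal R) (hP : P ∈ associatedPrimes R (R ⧸ I)) :
    I.colon (I.colon P) = P := by
  obtain ⟨-, x, hx⟩ := isAssociatedPrime_iff.mp hP
  obtain ⟨x, rfl⟩ := Ideal.Quotient.mk_surjective x
  rw [hx, I.bot_colon_singleton_mk, I.colon_colon_colon]
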